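/- arXiv:1901.03168 — 2 statements merged into one kernel-verified Lean document; each statement's English description precedes it below -/
import Mathlib

section
/- Let A be an associative unital ring, T a classical n-tilting left A-module, 1 ≤ e ≤ n, and M ∈ KE_e(T). If X is a left A-module with Ext_A^i(T,X) = 0 for every i ≥ e (where Ext_A^0 = Hom_A), then Hom_A(X,M) = 0. Moreover, the same conclusion Hom_A(X',M)=0 holds for every quotient X' of such a module X, and for every module obtained as an extension of such quotients. -/
set_option maxHeartbeats 1000000
set_option synthInstance.maxHeartbeats 400000
open CategoryTheory Limits
universe u
variable (A : Type u) [Ring A]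
noncomputable instance : HasDerivedCategory (ModuleCat.{u} A) := HasDerivedCategory.standard _
instance : HasExt.{u+1} (ModuleCat.{u} A) := hasExt_of_hasDerivedCategory _

/-- `X` is a direct summand of a coproduct of copies of `T`. -/
def IsSummandOfCopies (T X : Type u) [AddCommGroup T] [Module A T]
    [AddCommGroup X] [Module A X] : Prop :=
  ∃ (ι : Type u) (s : X →ₗ[A] (ι →₀ T)) (r : (ι →₀ T) →ₗ[A] X),
    r.comp s = LinearMap.id

/-- `T` is a classical `n`-tilting left `A`-module. -/
structure IsClassicalTilting (T : Type u) [AddCommGroup T] [Module A T] (n : ℕ) : Prop where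
  /-- `p_n`: a projective resolution of length `n` by finitely generated projectives -/
  proj_res : ∃ pr : ProjectiveResolution (ModuleCat.of A T),
      (∀ i, Module.Finite A (pr.complex.X i)) ∧ ∀ i, n < i → IsZero (pr.complex.X i)
  /-- `e_n`: rigidity -/
  rigid : ∀ i, 0 < i → i ≤ n →
      Subsingleton (Abelian.Ext (ModuleCat.of A T) (ModuleCat.of A T) i)
  /-- `g_n`: a coresolution `0 → A → T_0 → ⋯ → T_n → 0` by finitely generated
  direct summands of coproducts of copies of `T` -/
  cores : ∃ S : ComposableArrows (ModuleCat.{u} A) (n+3),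
      S.Exact ∧ IsZero (S.obj' 0) ∧ IsZero (S.obj' (n+3)) ∧
      S.obj' 1 = ModuleCat.of A A ∧
      ∀ i, (h : i ≤ n) → Module.Finite A (S.obj' (i+2) (by omega)) ∧
        IsSummandOfCopies A T (S.obj' (i+2) (by omega))

variable (T : Type u) [AddCommGroup T] [Module A T]

/-- `X ∈ KE_e(T)`: `Ext_A^i(T,X) = 0` for every `i ≠ e`, with the convention
`Ext_A^0 = Hom_A`. -/
def memKE (e : ℕ) (X : ModuleCat.{u} A) : Prop :=
  ∀ i : ℕ, i ≠ e → Subsingleton (Abelian.Ext (ModuleCat.of A T) X i)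

/-- `Ext_A^i(T,X) = 0` for every `i ≥ e` (with the convention
`Ext_A^0 = Hom_A`). -/
def ExtVanishFrom (e : ℕ) (X : ModuleCat.{u} A) : Prop :=
  ∀ i : ℕ, e ≤ i → Subsingleton (Abelian.Ext (ModuleCat.of A T) X i)

/-- `X'` is an epimorphic image of a module `X` with `Ext_A^i(T,X) = 0` for
all `i ≥ e`. -/
def QuotOfExtVanishFrom (e : ℕ) (X' : ModuleCat.{u} A) : Prop :=
  ∃ (X : ModuleCat.{u} A) (π : X ⟶ X'), Epi π ∧ ExtVanishFrom A T e X


/-!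
Split the coresolution `0 → A → T₀ → ⋯ → Tₙ → 0` into short exact sequences
`0 → Cₖ → Tₖ → Cₖ₊₁ → 0`, with `C₀ ≅ A` and `Cₙ ≅ Tₙ`. Every `Tₖ` is a finite direct summand
of copies of `T`, so `Ext^{≥e}(Tₖ, X) = 0` and `Ext^{≠e}(Tₖ, M) = 0`. Dimension shifting down
from `Cₙ` gives `Ext^e(C_e, X) = 0`. For `k < e` the connecting maps
`Ext^k(Cₖ, M) → Ext^{k+1}(Cₖ₊₁, M)` are injective, so a composite `A → X → M`, viewed in
`Ext^0(C₀, M)`, embeds into `Ext^e(C_e, M)`, where it factors through `Ext^e(C_e, X) = 0`.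
As `A` generates, `f = 0`; quotients and extensions follow formally.
-/

universe w

namespace CategoryTheory

open Abelian

variable {C : Type*} [Category C] [Abelian C] [HasExt.{w} C]

lemma Abelian.Ext.subsingleton_of_retract {W V : C} (h : Retract W V) {Y : C} {n : ℕ}
    (hV : Subsingleton (Ext V Y n)) : Subsingleton (Ext W Y n) := by
  have : Function.LeftInverse (fun β : Ext V Y n ↦ (Ext.mk₀ h.i).comp β (zero_add n))
      (fun α ↦ (Ext.mk₀ h.r).comp α (zero_add n)) := fun α ↦ by
    simp only [Ext.mk₀_comp_mk₀_assoc, h.retract, Ext.mk₀_id_comp]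
  exact this.injective.subsingleton

lemma Abelian.Ext.subsingleton_biproduct {J : Type*} [Fintype J] (X : J → C) [HasBiproduct X]
    {Y : C} {n : ℕ} (hX : ∀ j, Subsingleton (Ext (X j) Y n)) : Subsingleton (Ext (⨁ X) Y n) :=
  (Ext.biproductAddEquiv (biproduct.isBilimit X) Y n).toEquiv.subsingleton

namespace ShortComplex.ShortExact

variable {S : ShortComplex C} (hS : S.ShortExact) {Y : C} {n : ℕ}
include hS

lemma eq_zero_of_extClass_comp_eq_zero (h₂ : Subsingleton (Ext S.X₂ Y n)) (α : Ext S.X₁ Y n)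
    (hα : hS.extClass.comp α (add_comm 1 n) = 0) : α = 0 := by
  obtain ⟨β, rfl⟩ := Ext.contravariant_sequence_exact₁ hS Y α (add_comm 1 n) hα
  rw [Subsingleton.elim β 0, Ext.comp_zero]

lemma subsingleton_ext_X₁ (h₂ : Subsingleton (Ext S.X₂ Y n))
    (h₃ : Subsingleton (Ext S.X₃ Y (n + 1))) : Subsingleton (Ext S.X₁ Y n) :=
  subsingleton_of_forall_eq 0 fun α ↦
    hS.eq_zero_of_extClass_comp_eq_zero h₂ α (Subsingleton.elim _ _)

lemma comp_mk₀_eq_zero {M : C} (f : Y ⟶ M) (h₂ : Subsingleton (Ext S.X₂ M n))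
    (h₃ : ∀ β : Ext S.X₃ Y (n + 1), β.comp (Ext.mk₀ f) (add_zero _) = 0) (α : Ext S.X₁ Y n) :
    α.comp (Ext.mk₀ f) (add_zero n) = 0 :=
  hS.eq_zero_of_extClass_comp_eq_zero h₂ _ <| by
    rw [← Ext.comp_assoc_of_third_deg_zero]
    exact h₃ _

end ShortComplex.ShortExact

end CategoryTheory

namespace CategoryTheory.ComposableArrows

open Abelian

variable {C : Type*} [Category C] [Abelian C] {n : ℕ} (S : ComposableArrows C (n + 3))

-- For a coresolution `S = (0 → P → T₀ → ⋯ → Tₙ → 0)` we have `S.obj' (k + 2) = Tₖ`, and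
-- `S.cosyzygy k = ker (Tₖ → Tₖ₊₁)`.
noncomputable abbrev cosyzygy (k : ℕ) (hk : k ≤ n) : C :=
  kernel (S.map' (k + 2) (k + 3))

noncomputable def cosyzygyShortComplex (hS : S.IsComplex) (k : ℕ) (hk : k < n) :
    ShortComplex C :=
  ShortComplex.mk (kernel.ι (S.map' (k + 2) (k + 3)))
    (kernel.lift (S.map' (k + 3) (k + 4)) (S.map' (k + 2) (k + 3))
      (hS.zero' (k + 2) (k + 3) (k + 4)))
    (by ext; simp)

variable {S}

lemma cosyzygyShortComplex_shortExact (hS : S.Exact) (k : ℕ) (hk : k < n) :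
    (S.cosyzygyShortComplex hS.toIsComplex k hk).ShortExact where
  exact := ShortComplex.exact_of_f_is_kernel _
    (isKernelOfComp (kernel.ι _) _ (kernelIsKernel _) _ (kernel.lift_ι _ _ _))
  mono_f := by dsimp [cosyzygyShortComplex]; infer_instance
  epi_g := (hS.exact' (k + 2) (k + 3) (k + 4)).epi_kernelLift

noncomputable def isoCosyzygyZero (hS : S.Exact) (h₀ : IsZero (S.obj' 0)) :
    S.obj' 1 ≅ S.cosyzygy 0 (Nat.zero_le n) := by
  let φ := kernel.lift (S.map' 2 3) (S.map' 1 2) (hS.toIsComplex.zero' 1 2 3)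
  have : Mono (S.map' 1 2) := (hS.exact' 0 1 2).mono_g (h₀.eq_of_src _ _)
  have : Mono φ := mono_of_mono_fac (kernel.lift_ι _ _ _)
  have : Epi φ := (hS.exact' 1 2 3).epi_kernelLift
  have : IsIso φ := isIso_of_mono_of_epi φ
  exact asIso φ

variable [HasExt.{w} C]

lemma subsingleton_ext_cosyzygy (hS : S.Exact) (hlast : IsZero (S.obj' (n + 3))) {X : C} {e : ℕ}
    (hX : ∀ k (hk : k ≤ n) j, e ≤ j → Subsingleton (Ext (S.obj' (k + 2)) X j))
    {k : ℕ} (hk : k ≤ n) (hek : e ≤ k) : Subsingleton (Ext (S.cosyzygy k hk) X k) := by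
  induction hk using Nat.decreasingInduction with
  | self =>
    have := kernel.ι_of_zero (hlast.eq_of_tgt (S.map' (n + 2) (n + 3)) 0)
    exact Ext.subsingleton_of_retract (.ofIso (asIso (kernel.ι _))) (hX n le_rfl n hek)
  | of_succ k hk ih =>
    exact (cosyzygyShortComplex_shortExact hS k hk).subsingleton_ext_X₁
      (hX k hk.le k hek) (ih (hek.trans k.le_succ))

lemma cosyzygy_comp_mk₀_eq_zero (hS : S.Exact) {X M : C} (f : X ⟶ M) {e : ℕ} (he : e ≤ n)
    (hM : ∀ k (hk : k ≤ n) j, j ≠ e → Subsingleton (Ext (S.obj' (k + 2)) M j))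
    (hf : ∀ α : Ext (S.cosyzygy e he) X e, α.comp (Ext.mk₀ f) (add_zero e) = 0)
    {k : ℕ} (hk : k ≤ e) (α : Ext (S.cosyzygy k (hk.trans he)) X k) :
    α.comp (Ext.mk₀ f) (add_zero k) = 0 := by
  induction hk using Nat.decreasingInduction with
  | self => exact hf α
  | of_succ k hk ih =>
    exact (cosyzygyShortComplex_shortExact hS k (hk.trans_le he)).comp_mk₀_eq_zero f
      (hM k (hk.le.trans he) k hk.ne) ih α

theorem Exact.comp_eq_zero_of_subsingleton_ext (hS : S.Exact) (h₀ : IsZero (S.obj' 0))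
    (hlast : IsZero (S.obj' (n + 3))) {X M : C} {e : ℕ} (he : e ≤ n)
    (hX : ∀ k (hk : k ≤ n) j, e ≤ j → Subsingleton (Ext (S.obj' (k + 2)) X j))
    (hM : ∀ k (hk : k ≤ n) j, j ≠ e → Subsingleton (Ext (S.obj' (k + 2)) M j))
    (g : S.obj' 1 ⟶ X) (f : X ⟶ M) : g ≫ f = 0 := by
  have hX₀ := subsingleton_ext_cosyzygy hS hlast hX he le_rfl
  have h := cosyzygy_comp_mk₀_eq_zero hS f he hM
    (fun α ↦ by rw [Subsingleton.elim α 0, Ext.zero_comp]) (Nat.zero_le e)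
    (Ext.mk₀ ((isoCosyzygyZero hS h₀).inv ≫ g))
  rw [Ext.mk₀_comp_mk₀, Ext.mk₀_eq_zero_iff, Category.assoc] at h
  rw [← Iso.hom_inv_id_assoc (isoCosyzygyZero hS h₀) (g ≫ f), h, comp_zero]

end CategoryTheory.ComposableArrows

section Modules

open Abelian

variable {A T}

lemma IsSummandOfCopies.exists_fin_pi_retract {N : Type u} [AddCommGroup N] [Module A N]
    [Module.Finite A N] (h : IsSummandOfCopies A T N) :
    ∃ (m : ℕ) (s : N →ₗ[A] (Fin m → T)) (r : (Fin m → T) →ₗ[A] N),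
      r ∘ₗ s = LinearMap.id := by
  classical
  obtain ⟨ι, s, r, hrs⟩ := h
  obtain ⟨G, hG⟩ := Module.Finite.fg_top (R := A) (M := N)
  let F : Finset ι := G.biUnion fun x ↦ (s x).support
  have hsF : ∀ x, s x ∈ Finsupp.supported T A (F : Set ι) := by
    have : Submodule.span A (G : Set N) ≤ (Finsupp.supported T A (F : Set ι)).comap s :=
      Submodule.span_le.2 fun x hx ↦ (Finsupp.mem_supported A _).2 fun i hi ↦
        Finset.mem_biUnion.2 ⟨x, hx, hi⟩
    exact fun x ↦ this (hG ▸ Submodule.mem_top)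
  let e := Finsupp.supportedEquivFinsupp (M := T) (R := A) (F : Set ι) ≪≫ₗ
    Finsupp.linearEquivFunOnFinite A T (F : Set ι) ≪≫ₗ
    LinearEquiv.funCongrLeft A T (Fintype.equivFin (F : Set ι)).symm
  refine ⟨_, e.toLinearMap ∘ₗ s.codRestrict _ hsF,
    r ∘ₗ Submodule.subtype _ ∘ₗ e.symm.toLinearMap, ?_⟩
  ext x
  simpa using congr($hrs x)

lemma subsingleton_ext_of_isSummandOfCopies {N : ModuleCat.{u} A} [Module.Finite A N]
    (hN : IsSummandOfCopies A T N) {Y : ModuleCat.{u} A} {j : ℕ}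
    (hT : Subsingleton (Ext (ModuleCat.of A T) Y j)) : Subsingleton (Ext N Y j) := by
  obtain ⟨m, s, r, hrs⟩ := hN.exists_fin_pi_retract
  let hpi : Retract N (ModuleCat.of A (Fin m → T)) :=
    ⟨ModuleCat.ofHom s, ModuleCat.ofHom r, by ext x; exact congr($hrs x)⟩
  let hsum : ModuleCat.of A (Fin m → T) ≅ ⨁ fun _ : Fin m ↦ ModuleCat.of A T :=
    (ModuleCat.biproductIsoPi fun _ : Fin m ↦ ModuleCat.of A T).symm
  exact Ext.subsingleton_of_retract (hpi.trans (.ofIso hsum))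
    (Ext.subsingleton_biproduct _ fun _ ↦ hT)

lemma ModuleCat.eq_zero_of_forall_comp_eq_zero {X M : ModuleCat.{u} A} (f : X ⟶ M)
    (hf : ∀ g : ModuleCat.of A A ⟶ X, g ≫ f = 0) : f = 0 := by
  ext x
  simpa using congr($(hf (ModuleCat.ofHom (LinearMap.toSpanSingleton A X x))) 1)

end Modules

theorem stmt10 (n : ℕ) (hT : IsClassicalTilting A T n) (e : ℕ)
    (he2 : e ≤ n) (M : ModuleCat.{u} A) (hM : memKE A T e M) :
    (∀ X : ModuleCat.{u} A, ExtVanishFrom A T e X → ∀ f : X ⟶ M, f = 0) ∧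
    (∀ X' : ModuleCat.{u} A, QuotOfExtVanishFrom A T e X' →
      ∀ f : X' ⟶ M, f = 0) ∧
    (∀ S : ShortComplex (ModuleCat.{u} A), S.ShortExact →
      QuotOfExtVanishFrom A T e S.X₁ → QuotOfExtVanishFrom A T e S.X₃ →
      ∀ f : S.X₂ ⟶ M, f = 0) := by
  obtain ⟨S, hS, h₀, hlast, hA, hS_tilt⟩ := hT.cores
  have hS_ext {Y : ModuleCat.{u} A} {j : ℕ} (hY : Subsingleton (Abelian.Ext (.of A T) Y j))
      (k : ℕ) (hk : k ≤ n) : Subsingleton (Abelian.Ext (S.obj' (k + 2)) Y j) :=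
    have := (hS_tilt k hk).1
    subsingleton_ext_of_isSummandOfCopies (hS_tilt k hk).2 hY
  have hom_eq_zero (X : ModuleCat.{u} A) (hX : ExtVanishFrom A T e X) (f : X ⟶ M) : f = 0 :=
    ModuleCat.eq_zero_of_forall_comp_eq_zero f fun g ↦ by
      have := eqToHom hA.symm ≫= hS.comp_eq_zero_of_subsingleton_ext h₀ hlast he2
        (fun k hk j hj ↦ hS_ext (hX j hj) k hk) (fun k hk j hj ↦ hS_ext (hM j hj) k hk)
        (eqToHom hA ≫ g) f
      rwa [Category.assoc, eqToHom_trans_assoc, eqToHom_refl, Category.id_comp, comp_zero] at this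
  have quot_eq_zero (X' : ModuleCat.{u} A) (hX' : QuotOfExtVanishFrom A T e X')
      (f : X' ⟶ M) : f = 0 := by
    obtain ⟨X, π, _, hX⟩ := hX'
    rw [← cancel_epi π, hom_eq_zero X hX (π ≫ f), comp_zero]
  refine ⟨hom_eq_zero, quot_eq_zero, fun E hE h₁ h₃ f ↦ ?_⟩
  have := hE.epi_g
  rw [← hE.exact.g_desc f (quot_eq_zero _ h₁ _), quot_eq_zero _ h₃ (hE.exact.desc _ _),
    comp_zero]
end

section
/- Let R = (R^{≤0}, R^{≥0}) and S = (S^{≤0}, S^{≥0}) be two t-structures on the derived category D(A) of left A-modules over an associative unital ring A, such that R^{≤-1} ⊆ S^{≤0} ⊆ R^{≤0} (equivalently, R^{≥0} ⊆ S^{≥0} ⊆ R^{≥-1}). Set X = H_R ∩ S^{≤0} and Y = H_R ∩ S^{≥1}, where H_R = R^{≤0} ∩ R^{≥0} is the heart of R. Then (X, Y) is a torsion pair in the abelian category H_R, one has X = R^{≥0} ∩ S^{≤0} and Y = R^{≤0} ∩ S^{≥1}, and S is the tilt of R with respect to (X, Y): S^{≤0} = {X' ∈ R^{≤0} : H_R^0(X')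 ∈ X} and S^{≥0} = {X' ∈ R^{≥-1} : H_R^{-1}(X') ∈ Y}, where H_R^i denotes the i-th cohomology functor with respect to R. -/
set_option maxHeartbeats 1000000
set_option synthInstance.maxHeartbeats 400000
open CategoryTheory Limits Triangulated Pretriangulated
universe u
variable (A : Type u) [Ring A]
/-- The derived category `D(A)` of `A`-Mod. -/
abbrev DA := DerivedCategory (ModuleCat.{u} A)

/-- Membership in the heart of a t-structure. -/
def inHeart (t : TStructure (DA A)) (X : DA A) : Prop := t.le 0 X ∧ t.ge 0 X

/-!
Orthogonality turns `R^{≤-1} ⊆ S^{≤0} ⊆ R^{≤0}` into `R^{≥0} ⊆ S^{≥0} ⊆ R^{≥-1}`. Everything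
else comes from closure of aisles and coaisles under extensions, applied to truncation triangles:
the `S`-truncation triangle `X → M → Y` of `M ∈ H_R` has `X, Y ∈ H_R`, and the `R`-truncation
triangle `W → Z → H` at `-1` of `Z ∈ S^{≤0}` (resp. `Z ∈ S^{≥0}`) has `H ∈ S^{≤0}`
(resp. `W ∈ S^{≥0}`).
-/

namespace CategoryTheory.TStructure

variable {C : Type*} [Category C] [Preadditive C] [HasZeroObject C] [HasShift C ℤ]
  [∀ n : ℤ, (shiftFunctor C n).Additive] [Pretriangulated C]

lemma isLE_add_of_forall_isLE_imp (t₁ t₂ : TStructure C) {a b : ℤ}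
    (h : ∀ X, t₁.IsLE X a → t₂.IsLE X b) (n : ℤ) (X : C) (hX : t₁.IsLE X (a + n)) :
    t₂.IsLE X (b + n) :=
  have := h _ (t₁.isLE_shift X (a + n) n a)
  t₂.isLE_of_shift X (b + n) n b

lemma isGE_add_of_forall_isLE_imp (t₁ t₂ : TStructure C) {a b : ℤ}
    (h : ∀ X, t₁.IsLE X a → t₂.IsLE X b) (n : ℤ) (Y : C) (hY : t₂.IsGE Y (b + n)) :
    t₁.IsGE Y (a + n) := by
  rw [t₁.isGE_iff_orthogonal (a + n - 1) (a + n) (by lia)]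
  intro W f hW
  have := isLE_add_of_forall_isLE_imp t₁ t₂ h (n - 1) W
    (t₁.isLE_of_le W (a + n - 1) (a + (n - 1)))
  exact t₂.zero f (b + (n - 1)) (b + n)

section Tilt

variable (R S : TStructure C)

lemma exists_triangle_torsion_of_mem_heart (hRS₁ : ∀ X, R.IsLE X (-1) → S.IsLE X 0)
    (hRS₂ : ∀ X, S.IsLE X 0 → R.IsLE X 0) (M : C) (hM : R.IsLE M 0 ∧ R.IsGE M 0) :
    ∃ (X Y : C) (f : X ⟶ M) (g : M ⟶ Y) (h : Y ⟶ X⟦(1 : ℤ)⟧),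
      (R.IsLE X 0 ∧ R.IsGE X 0) ∧ S.IsLE X 0 ∧ (R.IsLE Y 0 ∧ R.IsGE Y 0) ∧ S.IsGE Y 1 ∧
        Triangle.mk f g h ∈ distTriang C := by
  obtain ⟨X, Y, hX, hY, f, g, h, hT⟩ := S.exists_triangle M 0 1 rfl
  have hXS : S.IsLE X 0 := ⟨hX⟩
  have hYS : S.IsGE Y 1 := ⟨hY⟩
  have hXR : R.IsLE X 0 := hRS₂ X hXS
  have hYR : R.IsGE Y 0 := isGE_add_of_forall_isLE_imp R S hRS₁ 1 Y hYS
  have := R.isGE_shift Y 0 (-1) 1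
  have := R.isLE_shift X 0 1 (-1)
  exact ⟨X, Y, f, g, h,
    ⟨hXR, R.isGE₂ _ (inv_rot_of_distTriang _ hT) 0 (R.isGE_of_ge (Y⟦(-1 : ℤ)⟧) 0 1) hM.2⟩, hXS,
    ⟨R.isLE₂ _ (rot_of_distTriang _ hT) 0 hM.1 (R.isLE_of_le (X⟦(1 : ℤ)⟧) (-1) 0), hYR⟩, hYS, hT⟩

lemma isLE_zero_iff_exists_triangle_heart (hRS₁ : ∀ X, R.IsLE X (-1) → S.IsLE X 0)
    (hRS₂ : ∀ X, S.IsLE X 0 → R.IsLE X 0) (Z : C) :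
    S.IsLE Z 0 ↔ R.IsLE Z 0 ∧
      ∃ (W H : C) (f : W ⟶ Z) (g : Z ⟶ H) (h : H ⟶ W⟦(1 : ℤ)⟧),
        R.IsLE W (-1) ∧ (R.IsLE H 0 ∧ R.IsGE H 0) ∧ S.IsLE H 0 ∧
          Triangle.mk f g h ∈ distTriang C := by
  refine ⟨fun hZ ↦ ⟨hRS₂ Z hZ, ?_⟩, fun ⟨_, W, H, f, g, h, hW, _, hH, hT⟩ ↦
    S.isLE₂ _ hT 0 (hRS₁ W hW) hH⟩
  obtain ⟨W, H, hW, hH, f, g, h, hT⟩ := R.exists_triangle Z (-1) 0 (by lia)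
  have : R.IsLE W (-1) := ⟨hW⟩
  have := R.isLE_shift W (-1) 1 (-2)
  have hHS : S.IsLE H 0 :=
    S.isLE₂ _ (rot_of_distTriang _ hT) 0 hZ (hRS₁ _ (R.isLE_of_le (W⟦(1 : ℤ)⟧) (-2) (-1)))
  exact ⟨W, H, f, g, h, inferInstance, ⟨hRS₂ H hHS, ⟨hH⟩⟩, hHS, hT⟩

lemma isGE_zero_iff_exists_triangle_heart (hRS₁ : ∀ X, R.IsLE X (-1) → S.IsLE X 0)
    (hRS₂ : ∀ X, S.IsLE X 0 → R.IsLE X 0) (Z : C) :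
    S.IsGE Z 0 ↔ R.IsGE Z (-1) ∧
      ∃ (W B : C) (f : W ⟶ Z) (g : Z ⟶ B) (h : B ⟶ W⟦(1 : ℤ)⟧),
        R.IsGE B 0 ∧ (R.IsLE (W⟦(-1 : ℤ)⟧) 0 ∧ R.IsGE (W⟦(-1 : ℤ)⟧) 0) ∧
          S.IsGE (W⟦(-1 : ℤ)⟧) 1 ∧ Triangle.mk f g h ∈ distTriang C := by
  have hSR (X : C) (hX : S.IsGE X 0) : R.IsGE X (-1) := isGE_add_of_forall_isLE_imp R S hRS₁ 0 X hX
  have hRS (n : ℤ) (X : C) (hX : R.IsGE X n) : S.IsGE X n := by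
    simpa using isGE_add_of_forall_isLE_imp S R hRS₂ n X (by simpa using hX)
  refine ⟨fun hZ ↦ ⟨hSR Z hZ, ?_⟩, fun ⟨_, W, B, f, g, h, hB, _, hW, hT⟩ ↦ ?_⟩
  · obtain ⟨W, B, hW, hB, f, g, h, hT⟩ := R.exists_triangle Z (-1) 0 (by lia)
    have : R.IsLE W (-1) := ⟨hW⟩
    have : R.IsGE B 0 := ⟨hB⟩
    have := hRS 1 _ (R.isGE_shift B 0 (-1) 1)
    have hWS : S.IsGE W 0 :=
      S.isGE₂ _ (inv_rot_of_distTriang _ hT) 0 (S.isGE_of_ge (B⟦(-1 : ℤ)⟧) 0 1) hZ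
    have := hSR W hWS
    exact ⟨W, B, f, g, h, inferInstance, ⟨R.isLE_shift W (-1) (-1) 0, R.isGE_shift W (-1) (-1) 0⟩,
      S.isGE_shift W 0 (-1) 1, hT⟩
  · exact S.isGE₂ _ hT 0 ((S.isGE_shift_iff W 0 (-1) 1).1 hW) (hRS 0 B hB)

end Tilt

end CategoryTheory.TStructure

/-- (Polishchuk / Happel–Reiten–Smalø) If `R`, `S` are
t-structures on `D(A)` with `R^{≤-1} ⊆ S^{≤0} ⊆ R^{≤0}`, then
`𝒳 = H_R ∩ S^{≤0}` and `𝒴 = H_R ∩ S^{≥1}` form a torsion pair in the heart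
`H_R` (short exact sequences in the heart being encoded by distinguished
triangles), `𝒳 = R^{≥0} ∩ S^{≤0}`, `𝒴 = R^{≤0} ∩ S^{≥1}`, and `S` is the tilt
of `R` with respect to `(𝒳, 𝒴)` (the conditions `H_R^0(Z) ∈ 𝒳`, resp.
`H_R^{-1}(Z) ∈ 𝒴`, being encoded by the truncation triangles of `R`). -/
theorem stmt17 (R S : TStructure (DA A))
    (hRS₁ : ∀ X : DA A, R.le (-1) X → S.le 0 X)
    (hRS₂ : ∀ X : DA A, S.le 0 X → R.le 0 X) :
    -- `(𝒳, 𝒴)` is a torsion pair in `H_R`: Hom-vanishing ...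
    (∀ X Y : DA A, inHeart A R X → S.le 0 X → inHeart A R Y → S.ge 1 Y →
      ∀ f : X ⟶ Y, f = 0) ∧
    -- ... and every object of `H_R` is an extension of an object of `𝒴`
    -- by an object of `𝒳`
    (∀ M : DA A, inHeart A R M →
      ∃ (X Y : DA A) (f : X ⟶ M) (g : M ⟶ Y) (h : Y ⟶ X⟦(1:ℤ)⟧),
        inHeart A R X ∧ S.le 0 X ∧ inHeart A R Y ∧ S.ge 1 Y ∧
        Triangle.mk f g h ∈ distTriang (DA A)) ∧
    -- `𝒳 = R^{≥0} ∩ S^{≤0}`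
    (∀ X : DA A, (inHeart A R X ∧ S.le 0 X) ↔ (R.ge 0 X ∧ S.le 0 X)) ∧
    -- `𝒴 = R^{≤0} ∩ S^{≥1}`
    (∀ Y : DA A, (inHeart A R Y ∧ S.ge 1 Y) ↔ (R.le 0 Y ∧ S.ge 1 Y)) ∧
    -- `S^{≤0} = {Z ∈ R^{≤0} : H_R^0(Z) ∈ 𝒳}`
    (∀ Z : DA A, S.le 0 Z ↔ (R.le 0 Z ∧
      ∃ (W H : DA A) (f : W ⟶ Z) (g : Z ⟶ H) (h : H ⟶ W⟦(1:ℤ)⟧),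
        R.le (-1) W ∧ inHeart A R H ∧ S.le 0 H ∧
        Triangle.mk f g h ∈ distTriang (DA A))) ∧
    -- `S^{≥0} = {Z ∈ R^{≥-1} : H_R^{-1}(Z) ∈ 𝒴}`
    (∀ Z : DA A, S.ge 0 Z ↔ (R.ge (-1) Z ∧
      ∃ (W B : DA A) (f : W ⟶ Z) (g : Z ⟶ B) (h : B ⟶ W⟦(1:ℤ)⟧),
        R.ge 0 B ∧ inHeart A R (W⟦(-1:ℤ)⟧) ∧ S.ge 1 (W⟦(-1:ℤ)⟧) ∧
        Triangle.mk f g h ∈ distTriang (DA A))) := by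
  simp only [inHeart, TStructure.le_iff_isLE, TStructure.ge_iff_isGE] at hRS₁ hRS₂ ⊢
  have hYR (Y : DA A) (hY : S.IsGE Y 1) : R.IsGE Y 0 :=
    TStructure.isGE_add_of_forall_isLE_imp R S hRS₁ 1 Y hY
  exact ⟨fun X Y _ _ _ _ f ↦ S.zero f 0 1,
    TStructure.exists_triangle_torsion_of_mem_heart R S hRS₁ hRS₂,
    fun X ↦ ⟨fun ⟨⟨_, hR⟩, hS⟩ ↦ ⟨hR, hS⟩, fun ⟨hR, hS⟩ ↦ ⟨⟨hRS₂ X hS, hR⟩, hS⟩⟩,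
    fun Y ↦ ⟨fun ⟨⟨hR, _⟩, hS⟩ ↦ ⟨hR, hS⟩, fun ⟨hR, hS⟩ ↦ ⟨⟨hR, hYR Y hS⟩, hS⟩⟩,
    TStructure.isLE_zero_iff_exists_triangle_heart R S hRS₁ hRS₂,
    TStructure.isGE_zero_iff_exists_triangle_heart R S hRS₁ hRS₂⟩
end
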